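/- arXiv:1809.02423 — 2 statements merged into one kernel-verified Lean document; each statement's English description precedes it below -/
import Mathlib

section
/- If S is a GCD-closed set of 8 distinct positive integers whose LCM matrix [S] is singular, then the poset (S, |) is isomorphic to the Boolean lattice of subsets of a 3-element set (the cube semilattice). -/
open scoped Classical

/-!
Since `lcm a b = a * b / gcd a b` and `S` is gcd-closed, the LCM matrix factors as
`D * Z * diag (psi S) * Zᵀ * D` with `D = diag a`, `Z` the unitriangular zeta matrix of `(S, ∣)`
and `psi S` the Möbius inverse of `n ↦ 1 / n` on `(S, ∣)`. So `[S]` is singular iff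
`psi S w = 0` for some `w ∈ S`.

By the crosscut theorem, `psi S w` is the sum of `(-1) ^ #T / meet w T` over the sets `T` of
coatoms of `w` (the elements of `S` covered by `w`), where `meet w T` is the gcd of `w` and `T`.
Group the terms with `#T ≥ 2` by the value `m` of `meet w T`. Each coatom is at least twice any
such `m` dividing it, and this makes the positive coefficients outweigh `∑ 1 / y` over the coatoms
whenever there are at most three such values `m`. A zero of `psi` therefore needs at least two
coatoms and four values `m`. As `w`, its coatoms and these values are distinct elements of `S`,
`#S = 8` leaves exactly three coatoms and four values. Then every element of `S` is `meet w T`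
for a set `T` of coatoms, and `x ↦ {coatoms not divisible by x}` is an isomorphism onto the
subsets of a 3-element set.
-/

open Finset

def GcdClosed (S : Finset ℕ) : Prop := ∀ a ∈ S, ∀ b ∈ S, Nat.gcd a b ∈ S

noncomputable def psi (S : Finset ℕ) (n : ℕ) : ℚ :=
  1 / n - ∑ y ∈ {y ∈ S | y ∣ n ∧ y < n}.attach, psi S y
termination_by n
decreasing_by exact (mem_filter.mp y.2).2.2

lemma sum_filter_dvd_psi {S : Finset ℕ} {n : ℕ} (hn : n ∈ S) (hn0 : n ≠ 0) :
    ∑ y ∈ S with y ∣ n, psi S y = 1 / n := by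
  have hsplit : {y ∈ S | y ∣ n} = insert n {y ∈ S | y ∣ n ∧ y < n} := by
    ext y
    simp only [mem_insert, mem_filter]
    constructor
    · rintro ⟨hy, hyn⟩
      rcases eq_or_ne y n with rfl | hne
      · exact Or.inl rfl
      · exact Or.inr ⟨hy, hyn, (Nat.le_of_dvd (Nat.pos_of_ne_zero hn0) hyn).lt_of_ne hne⟩
    · rintro (rfl | ⟨hy, hyn, -⟩)
      exacts [⟨hn, dvd_rfl⟩, ⟨hy, hyn⟩]
  rw [hsplit, sum_insert (by simp), psi, sum_attach]
  ring

lemma det_lcm_matrix {S : Finset ℕ} (hS0 : 0 ∉ S) (hS : GcdClosed S) :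
    (Matrix.of fun a b : {x // x ∈ S} => (Nat.lcm a.1 b.1 : ℚ)).det
      = (∏ a : {x // x ∈ S}, (a.1 : ℚ)) ^ 2 * ∏ a : {x // x ∈ S}, psi S a.1 := by
  have hne : ∀ a : {x // x ∈ S}, a.1 ≠ 0 := fun a h => hS0 (h ▸ a.2)
  let Z : Matrix {x // x ∈ S} {x // x ∈ S} ℚ := .of fun a z => if z.1 ∣ a.1 then 1 else 0
  let D := Matrix.diagonal fun a : {x // x ∈ S} => (a.1 : ℚ)
  have hZ : Z.det = 1 := by
    rw [Matrix.det_of_isLowerTriangular Z fun a z hza => if_neg fun hdvd =>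
      (Nat.le_of_dvd (Nat.pos_of_ne_zero (hne a)) hdvd).not_gt hza]
    simp [Z]
  have hfactor : (Matrix.of fun a b : {x // x ∈ S} => (Nat.lcm a.1 b.1 : ℚ))
      = D * (Z * Matrix.diagonal (fun a => psi S a.1) * Z.transpose) * D := by
    ext a b
    have hinv : ∑ z, Z a z * psi S z.1 * Z b z = 1 / (Nat.gcd a.1 b.1 : ℚ) := by
      rw [← sum_filter_dvd_psi (hS _ a.2 _ b.2) (Nat.gcd_ne_zero_left (hne a)), sum_filter,
        ← sum_coe_sort S]
      refine sum_congr rfl fun z _ => ?_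
      simp only [Z, Matrix.of_apply, Nat.dvd_gcd_iff]
      split_ifs <;> simp_all
    have hlcm : (Nat.gcd a.1 b.1 : ℚ) * Nat.lcm a.1 b.1 = a.1 * b.1 := by
      exact_mod_cast Nat.gcd_mul_lcm a.1 b.1
    have hgcd : (Nat.gcd a.1 b.1 : ℚ) ≠ 0 := by exact_mod_cast Nat.gcd_ne_zero_left (hne a)
    rw [Matrix.mul_diagonal, Matrix.diagonal_mul, Matrix.mul_apply]
    simp only [Matrix.mul_diagonal, Matrix.transpose_apply, hinv, Matrix.of_apply]
    field_simp
    linarith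
  rw [hfactor, Matrix.det_mul, Matrix.det_mul, Matrix.det_mul, Matrix.det_mul,
    Matrix.det_transpose, hZ, Matrix.det_diagonal, Matrix.det_diagonal]
  ring

lemma exists_psi_eq_zero {S : Finset ℕ} (hS0 : 0 ∉ S) (hS : GcdClosed S)
    (hsing : (Matrix.of fun a b : {x // x ∈ S} => (Nat.lcm a.1 b.1 : ℚ)).det = 0) :
    ∃ w ∈ S, psi S w = 0 := by
  rw [det_lcm_matrix hS0 hS] at hsing
  have hprod : ∏ a : {x // x ∈ S}, (a.1 : ℚ) ≠ 0 :=
    prod_ne_zero_iff.mpr fun a _ => Nat.cast_ne_zero.mpr fun h => hS0 (h ▸ a.2)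
  obtain ⟨a, -, ha⟩ :=
    prod_eq_zero_iff.mp ((mul_eq_zero.mp hsing).resolve_left (pow_ne_zero 2 hprod))
  exact ⟨a.1, a.2, ha⟩

def coatoms (S : Finset ℕ) (w : ℕ) : Finset ℕ :=
  {y ∈ S | y ∣ w ∧ y ≠ w ∧ ∀ u ∈ S, y ∣ u → u ∣ w → u = y ∨ u = w}

def meet (w : ℕ) (T : Finset ℕ) : ℕ := (insert w T).gcd id

section Meet

variable {S C T : Finset ℕ} {w x y : ℕ}

lemma dvd_meet_iff : x ∣ meet w T ↔ x ∣ w ∧ ∀ y ∈ T, x ∣ y := by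
  rw [meet, Finset.dvd_gcd_iff, forall_mem_insert]
  rfl

lemma meet_dvd_self : meet w T ∣ w := (dvd_meet_iff.mp dvd_rfl).1

lemma meet_dvd (hy : y ∈ T) : meet w T ∣ y := (dvd_meet_iff.mp dvd_rfl).2 y hy

@[simp] lemma meet_empty : meet w ∅ = w := by simp [meet]

lemma meet_singleton (hyw : y ∣ w) : meet w {y} = y := by
  simp only [meet, gcd_insert, gcd_singleton, id, normalize_eq]
  exact Nat.gcd_eq_right hyw

lemma meet_mem (hS : GcdClosed S) (hw : w ∈ S) (hT : T ⊆ S) : meet w T ∈ S := by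
  induction T using Finset.induction_on with
  | empty => simpa
  | insert y T _ ih =>
    have : meet w (insert y T) = Nat.gcd y (meet w T) := by
      simp only [meet, Finset.insert_comm w y, gcd_insert, id]; rfl
    rw [this]
    exact hS y (hT (mem_insert_self y T)) _ (ih ((subset_insert y T).trans hT))

lemma dvd_meet_iff_forall_dvd (hxw : x ∣ w) (hT : T ⊆ C) :
    x ∣ meet w T ↔ ∀ y ∈ C, meet w T ∣ y → x ∣ y :=
  ⟨fun hx _ _ hy => hx.trans hy,
    fun hx => dvd_meet_iff.mpr ⟨hxw, fun y hy => hx y (hT hy) (meet_dvd hy)⟩⟩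

end Meet

section Coatoms

variable {S : Finset ℕ} {w y y' z : ℕ}

lemma coatoms_subset : coatoms S w ⊆ S := filter_subset _ _

lemma dvd_of_mem_coatoms (hy : y ∈ coatoms S w) : y ∣ w := (mem_filter.mp hy).2.1

lemma ne_of_mem_coatoms (hy : y ∈ coatoms S w) : y ≠ w := (mem_filter.mp hy).2.2.1

lemma not_dvd_of_mem_coatoms (hy : y ∈ coatoms S w) (hy' : y' ∈ coatoms S w) (hne : y ≠ y') :
    ¬ y ∣ y' := fun hdvd => by
  rcases (mem_filter.mp hy).2.2.2 y' (coatoms_subset hy') hdvd (dvd_of_mem_coatoms hy') with h | h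
  exacts [hne h.symm, ne_of_mem_coatoms hy' h]

lemma exists_mem_coatoms_dvd (hS0 : 0 ∉ S) (hz : z ∈ S) (hzw : z ∣ w)
    (hne : z ≠ w) : ∃ y ∈ coatoms S w, z ∣ y := by
  obtain ⟨y, hy, hmax⟩ := exists_max_image {u ∈ S | z ∣ u ∧ u ∣ w ∧ u ≠ w} id
    ⟨z, mem_filter.mpr ⟨hz, dvd_rfl, hzw, hne⟩⟩
  obtain ⟨hyS, hzy, hyw, hynw⟩ := mem_filter.mp hy
  refine ⟨y, mem_filter.mpr ⟨hyS, hyw, hynw, fun u hu hyu huw => ?_⟩, hzy⟩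
  by_contra! h
  have hu0 : u ≠ 0 := fun h0 => hS0 (h0 ▸ hu)
  have hle : u ≤ y := hmax u (mem_filter.mpr ⟨hu, hzy.trans hyu, huw, h.2⟩)
  exact h.1 (le_antisymm hle (Nat.le_of_dvd (Nat.pos_of_ne_zero hu0) hyu))

end Coatoms

section Crosscut

variable {S : Finset ℕ} {w y : ℕ}

lemma sum_neg_one_pow_filter_dvd_meet (hS0 : 0 ∉ S) (hw : w ∈ S) (hy : y ∈ S) :
    ∑ T ∈ (coatoms S w).powerset with y ∣ meet w T, (-1 : ℚ) ^ #T = if y = w then 1 else 0 := by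
  by_cases hyw : y ∣ w
  · have hfilter : {T ∈ (coatoms S w).powerset | y ∣ meet w T}
        = {c ∈ coatoms S w | y ∣ c}.powerset := by
      ext T
      simp only [mem_filter, mem_powerset, dvd_meet_iff, subset_iff]
      exact ⟨fun h c hc => ⟨h.1 hc, h.2.2 c hc⟩,
        fun h => ⟨fun c hc => (h hc).1, hyw, fun c hc => (h hc).2⟩⟩
    have hempty : {c ∈ coatoms S w | y ∣ c} = ∅ ↔ y = w := by
      rw [filter_eq_empty_iff]
      constructor
      · intro h
        by_contra hne
        obtain ⟨c, hc, hyc⟩ := exists_mem_coatoms_dvd hS0 hy hyw hne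
        exact h hc hyc
      · rintro rfl c hc hwc
        exact ne_of_mem_coatoms hc (Nat.dvd_antisymm (dvd_of_mem_coatoms hc) hwc)
    have h := congrArg (Int.cast : ℤ → ℚ)
      (sum_powerset_neg_one_pow_card (x := {c ∈ coatoms S w | y ∣ c}))
    push_cast at h
    rw [hfilter, h]
    exact if_congr hempty rfl rfl
  · rw [if_neg (by rintro rfl; exact hyw dvd_rfl), sum_eq_zero]
    intro T hT
    exact absurd (dvd_meet_iff.mp (mem_filter.mp hT).2).1 hyw

theorem psi_eq_sum_powerset_coatoms (hS0 : 0 ∉ S) (hS : GcdClosed S) (hw : w ∈ S) :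
    psi S w = ∑ T ∈ (coatoms S w).powerset, (-1 : ℚ) ^ #T / meet w T := by
  have hw0 : w ≠ 0 := fun h => hS0 (h ▸ hw)
  symm
  calc ∑ T ∈ (coatoms S w).powerset, (-1 : ℚ) ^ #T / meet w T
      = ∑ T ∈ (coatoms S w).powerset, ∑ y ∈ S,
          if y ∣ meet w T then (-1 : ℚ) ^ #T * psi S y else 0 := by
        refine sum_congr rfl fun T hT => ?_
        rw [← sum_filter, ← mul_sum, sum_filter_dvd_psi
          (meet_mem hS hw ((mem_powerset.mp hT).trans coatoms_subset))
          (ne_zero_of_dvd_ne_zero hw0 meet_dvd_self), div_eq_mul_one_div]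
    _ = ∑ y ∈ S, (∑ T ∈ (coatoms S w).powerset with y ∣ meet w T, (-1 : ℚ) ^ #T) * psi S y := by
        rw [sum_comm]
        refine sum_congr rfl fun y _ => ?_
        rw [sum_filter, sum_mul]
        exact sum_congr rfl fun T _ => (ite_zero_mul _ _ _).symm
    _ = psi S w := by
        rw [sum_congr rfl fun y hy => by
          rw [sum_neg_one_pow_filter_dvd_meet hS0 hw hy, ite_mul, one_mul, zero_mul]]
        rw [sum_ite_eq' S w, if_pos hw]

lemma two_le_card_coatoms_of_psi_eq_zero (hS0 : 0 ∉ S) (hS : GcdClosed S) (hw : w ∈ S)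
    (hψ : psi S w = 0) : 2 ≤ #(coatoms S w) := by
  have hw0 : (w : ℚ) ≠ 0 := Nat.cast_ne_zero.mpr fun h => hS0 (h ▸ hw)
  rw [psi_eq_sum_powerset_coatoms hS0 hS hw] at hψ
  by_contra! h
  interval_cases ht : #(coatoms S w)
  · rw [card_eq_zero.mp ht] at hψ
    simp [hw0] at hψ
  · obtain ⟨y, hy⟩ := card_eq_one.mp ht
    have hyC : y ∈ coatoms S w := hy ▸ mem_singleton_self y
    rw [hy, ← insert_empty, sum_powerset_insert (notMem_empty y), powerset_empty, sum_singleton,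
      sum_singleton, insert_empty, meet_empty, meet_singleton (dvd_of_mem_coatoms hyC)] at hψ
    have hy0 : (y : ℚ) ≠ 0 := Nat.cast_ne_zero.mpr fun h => hS0 (h ▸ coatoms_subset hyC)
    simp only [card_empty, card_singleton, pow_zero, pow_one] at hψ
    field_simp at hψ
    exact ne_of_mem_coatoms hyC (by exact_mod_cast (by linarith : (y : ℚ) = w))

end Crosscut

lemma sum_powerset_eq_add_sum_singleton_add {α M : Type*} [DecidableEq α] [AddCommMonoid M]
    (s : Finset α) (f : Finset α → M) :
    ∑ T ∈ s.powerset, f T = f ∅ + ∑ a ∈ s, f {a} + ∑ T ∈ s.powerset with 2 ≤ #T, f T := by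
  have hsmall :
      {T ∈ s.powerset | ¬ 2 ≤ #T} = insert ∅ (s.map ⟨singleton, singleton_injective⟩) := by
    ext T
    simp only [mem_filter, mem_powerset, not_le, Nat.lt_succ_iff, Nat.le_one_iff_eq_zero_or_eq_one,
      card_eq_zero, card_eq_one, mem_insert, mem_map, Function.Embedding.coeFn_mk]
    constructor
    · rintro ⟨hT, rfl | ⟨a, rfl⟩⟩
      exacts [Or.inl rfl, Or.inr ⟨a, singleton_subset_iff.mp hT, rfl⟩]
    · rintro (rfl | ⟨a, ha, rfl⟩)
      exacts [⟨empty_subset s, Or.inl rfl⟩, ⟨singleton_subset_iff.mpr ha, Or.inr ⟨a, rfl⟩⟩]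
  rw [← sum_filter_not_add_sum_filter s.powerset (2 ≤ #·), hsmall, sum_insert (by simp), sum_map]
  rfl

def meets (S : Finset ℕ) (w : ℕ) : Finset ℕ :=
  {T ∈ (coatoms S w).powerset | 2 ≤ #T}.image (meet w)

noncomputable def meetCoeff (S : Finset ℕ) (w m : ℕ) : ℚ :=
  ∑ T ∈ (coatoms S w).powerset with 2 ≤ #T ∧ meet w T = m, (-1 : ℚ) ^ #T

section Meets

variable {S : Finset ℕ} {w m y : ℕ}

lemma mem_meets : m ∈ meets S w ↔ ∃ T ⊆ coatoms S w, 2 ≤ #T ∧ meet w T = m := by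
  simp [meets, and_assoc]

lemma meets_subset (hS : GcdClosed S) (hw : w ∈ S) : meets S w ⊆ S := fun m hm => by
  obtain ⟨T, hT, -, rfl⟩ := mem_meets.mp hm
  exact meet_mem hS hw (hT.trans coatoms_subset)

lemma meet_coatoms_mem_meets (h : 2 ≤ #(coatoms S w)) : meet w (coatoms S w) ∈ meets S w :=
  mem_meets.mpr ⟨_, subset_rfl, h, rfl⟩

lemma meet_coatoms_dvd_of_mem_meets (hm : m ∈ meets S w) : meet w (coatoms S w) ∣ m := by
  obtain ⟨T, hT, -, rfl⟩ := mem_meets.mp hm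
  exact dvd_meet_iff.mpr ⟨meet_dvd_self, fun y hy => meet_dvd (hT hy)⟩

lemma dvd_of_mem_meets (hm : m ∈ meets S w) : m ∣ w := by
  obtain ⟨T, -, -, rfl⟩ := mem_meets.mp hm
  exact meet_dvd_self

lemma two_le_card_filter_dvd_of_mem_meets (hm : m ∈ meets S w) :
    2 ≤ #{y ∈ coatoms S w | m ∣ y} := by
  obtain ⟨T, hT, hT2, rfl⟩ := mem_meets.mp hm
  exact hT2.trans (card_le_card fun y hy => mem_filter.mpr ⟨hT hy, meet_dvd hy⟩)

lemma notMem_coatoms_of_mem_meets (hm : m ∈ meets S w) : m ∉ coatoms S w := by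
  intro hmC
  obtain ⟨T, hT, hT2, rfl⟩ := mem_meets.mp hm
  obtain ⟨u, hu, v, hv, huv⟩ := one_lt_card.mp hT2
  have eq_of_mem : ∀ x ∈ T, meet w T = x := fun x hx => by
    by_contra hne
    exact not_dvd_of_mem_coatoms hmC (hT hx) hne (meet_dvd hx)
  exact huv ((eq_of_mem u hu).symm.trans (eq_of_mem v hv))

lemma ne_of_mem_meets (hm : m ∈ meets S w) : m ≠ w := by
  rintro rfl
  obtain ⟨T, hT, hT2, hTm⟩ := mem_meets.mp hm
  obtain ⟨u, hu⟩ := card_pos.mp (by omega : 0 < #T)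
  have hu' := hT hu
  exact ne_of_mem_coatoms hu' (Nat.dvd_antisymm (dvd_of_mem_coatoms hu') (hTm ▸ meet_dvd hu))

lemma two_mul_le_of_mem_meets (hS0 : 0 ∉ S) (hm : m ∈ meets S w) (hy : y ∈ coatoms S w)
    (hmy : m ∣ y) : 2 * m ≤ y := by
  obtain ⟨k, rfl⟩ := hmy
  have hk0 : k ≠ 0 := by rintro rfl; exact hS0 (by simpa using coatoms_subset hy)
  have hk1 : k ≠ 1 := by rintro rfl; exact notMem_coatoms_of_mem_meets hm (by simpa using hy)
  rw [mul_comm 2 m]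
  exact Nat.mul_le_mul_left m (by omega)

lemma card_meets_le_one (hC : #(coatoms S w) ≤ 2) : #(meets S w) ≤ 1 := by
  have h : ∀ m ∈ meets S w, m = meet w (coatoms S w) := fun m hm => by
    obtain ⟨T, hT, hT2, rfl⟩ := mem_meets.mp hm
    rw [eq_of_subset_of_card_le hT (by omega)]
  exact card_le_one.mpr fun m hm m' hm' => (h m hm).trans (h m' hm').symm

lemma psi_eq_sub_sum_coatoms_add_sum_meets (hS0 : 0 ∉ S) (hS : GcdClosed S) (hw : w ∈ S) :
    psi S w = 1 / w - ∑ y ∈ coatoms S w, 1 / (y : ℚ) + ∑ m ∈ meets S w, meetCoeff S w m / m := by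
  rw [psi_eq_sum_powerset_coatoms hS0 hS hw, sum_powerset_eq_add_sum_singleton_add,
    ← sum_fiberwise_of_maps_to (t := meets S w) (g := meet w) fun T hT => mem_image_of_mem _ hT]
  simp only [meet_empty, card_empty, pow_zero, card_singleton, pow_one, meetCoeff, sum_div,
    filter_filter]
  rw [sum_congr rfl fun y hy => by rw [meet_singleton (dvd_of_mem_coatoms hy)], sub_eq_add_neg,
    ← sum_neg_distrib]
  congr 1
  · congr 1
    exact sum_congr rfl fun y _ => by ring
  · refine sum_congr rfl fun m _ => sum_congr rfl fun T hT => ?_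
    rw [(mem_filter.mp hT).2.2]

lemma sum_meetCoeff_filter_dvd (hS0 : 0 ∉ S) (hS : GcdClosed S) (hw : w ∈ S)
    (hm : m ∈ meets S w) :
    ∑ m' ∈ meets S w with m ∣ m', meetCoeff S w m' = #{y ∈ coatoms S w | m ∣ y} - 1 := by
  have hsingle : ∑ y ∈ coatoms S w, (if m ∣ meet w {y} then (-1 : ℚ) ^ #{y} else 0)
      = -#{y ∈ coatoms S w | m ∣ y} := by
    rw [sum_congr rfl fun y hy => by rw [meet_singleton (dvd_of_mem_coatoms hy), card_singleton,
      pow_one], ← sum_filter, sum_const, nsmul_eq_mul, mul_neg_one]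
  have hmulti : ∑ T ∈ (coatoms S w).powerset with 2 ≤ #T,
      (if m ∣ meet w T then (-1 : ℚ) ^ #T else 0)
      = ∑ m' ∈ meets S w with m ∣ m', meetCoeff S w m' := by
    rw [← sum_filter, ← sum_fiberwise_of_maps_to (t := {m' ∈ meets S w | m ∣ m'}) (g := meet w)
      fun T hT => mem_filter.mpr ⟨mem_image_of_mem _ (mem_filter.mp hT).1, (mem_filter.mp hT).2⟩]
    refine sum_congr rfl fun m' hm' => ?_
    simp only [meetCoeff, filter_filter]
    refine sum_congr (filter_congr fun T _ => ?_) fun _ _ => rfl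
    constructor
    · rintro ⟨⟨h2, -⟩, rfl⟩; exact ⟨h2, rfl⟩
    · rintro ⟨h2, rfl⟩; exact ⟨⟨h2, (mem_filter.mp hm').2⟩, rfl⟩
  have h := sum_neg_one_pow_filter_dvd_meet hS0 hw (meets_subset hS hw hm)
  rw [if_neg (ne_of_mem_meets hm), sum_filter, sum_powerset_eq_add_sum_singleton_add, meet_empty,
    if_pos (dvd_of_mem_meets hm), hsingle, hmulti, card_empty, pow_zero] at h
  linarith

end Meets

section Positivity

variable {S : Finset ℕ} {w m₁ m₂ : ℕ}

lemma psi_pos_of_card_fiber_le (hS0 : 0 ∉ S) (hS : GcdClosed S) (hw : w ∈ S) (φ : ℕ → ℕ)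
    (hφ : ∀ y ∈ coatoms S w, φ y ∈ meets S w ∧ φ y ∣ y)
    (hcard : ∀ m ∈ meets S w, (#{y ∈ coatoms S w | φ y = m} : ℚ) ≤ 2 * meetCoeff S w m) :
    0 < psi S w := by
  have hpos : ∀ m ∈ S, (0 : ℚ) < m := fun m hm =>
    Nat.cast_pos.mpr (Nat.pos_of_ne_zero fun h => hS0 (h ▸ hm))
  have hsum : ∑ y ∈ coatoms S w, 1 / (y : ℚ) ≤ ∑ m ∈ meets S w, meetCoeff S w m / m :=
    calc ∑ y ∈ coatoms S w, 1 / (y : ℚ)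
        ≤ ∑ y ∈ coatoms S w, 1 / (2 * φ y : ℚ) := sum_le_sum fun y hy => by
          have hφy := (hφ y hy).1
          refine one_div_le_one_div_of_le
            (mul_pos two_pos (hpos _ (meets_subset hS hw hφy))) ?_
          exact_mod_cast two_mul_le_of_mem_meets hS0 hφy hy (hφ y hy).2
      _ = ∑ m ∈ meets S w, ∑ y ∈ coatoms S w with φ y = m, 1 / (2 * φ y : ℚ) :=
          (sum_fiberwise_of_maps_to (fun y hy => (hφ y hy).1) _).symm
      _ = ∑ m ∈ meets S w, (#{y ∈ coatoms S w | φ y = m} / 2 : ℚ) / m :=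
          sum_congr rfl fun m _ => by
            rw [sum_congr rfl fun y hy => by rw [(mem_filter.mp hy).2], sum_const, nsmul_eq_mul]
            ring
      _ ≤ ∑ m ∈ meets S w, meetCoeff S w m / m := sum_le_sum fun m hm =>
          div_le_div_of_nonneg_right (by linarith [hcard m hm]) (Nat.cast_nonneg m)
  rw [psi_eq_sub_sum_coatoms_add_sum_meets hS0 hS hw]
  linarith [one_div_pos.mpr (hpos w hw)]

lemma card_filter_meet_coatoms_dvd :
    #{y ∈ coatoms S w | meet w (coatoms S w) ∣ y} = #(coatoms S w) :=
  congrArg card (filter_true_of_mem fun _ hy => meet_dvd hy)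

lemma not_dvd_meet_coatoms (hm : m₁ ∈ meets S w) (hne : m₁ ≠ meet w (coatoms S w)) :
    ¬ m₁ ∣ meet w (coatoms S w) :=
  fun h => hne (Nat.dvd_antisymm h (meet_coatoms_dvd_of_mem_meets hm))

lemma card_filter_dvd_and_dvd_le_one (hm₁ : m₁ ∣ w) (hm₂ : m₂ ∣ w)
    (h : ∀ m ∈ meets S w, ¬ (m₁ ∣ m ∧ m₂ ∣ m)) :
    #{y ∈ coatoms S w | m₁ ∣ y ∧ m₂ ∣ y} ≤ 1 := by
  refine card_le_one.mpr fun y hy y' hy' => ?_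
  by_contra hne
  obtain ⟨hyC, h₁, h₂⟩ := mem_filter.mp hy
  obtain ⟨hy'C, h₁', h₂'⟩ := mem_filter.mp hy'
  have hpair : meet w {y, y'} ∈ meets S w :=
    mem_meets.mpr ⟨{y, y'}, insert_subset hyC (singleton_subset_iff.mpr hy'C),
      (card_pair hne).ge, rfl⟩
  exact h _ hpair ⟨dvd_meet_iff.mpr ⟨hm₁, by simp [h₁, h₁']⟩,
    dvd_meet_iff.mpr ⟨hm₂, by simp [h₂, h₂']⟩⟩

lemma psi_pos_of_meets_eq_singleton (hS0 : 0 ∉ S) (hS : GcdClosed S) (hw : w ∈ S)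
    (hC : 2 ≤ #(coatoms S w)) (hV : meets S w = {meet w (coatoms S w)}) : 0 < psi S w := by
  have hc := sum_meetCoeff_filter_dvd hS0 hS hw (hV ▸ mem_singleton_self _)
  rw [hV, filter_singleton, if_pos dvd_rfl, sum_singleton, card_filter_meet_coatoms_dvd] at hc
  refine psi_pos_of_card_fiber_le hS0 hS hw (fun _ => meet w (coatoms S w))
    (fun y hy => ⟨hV ▸ mem_singleton_self _, meet_dvd hy⟩) fun m hm => ?_
  rw [hV, mem_singleton] at hm
  subst hm
  rw [filter_true_of_mem fun _ _ => rfl, hc]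
  have : (2 : ℚ) ≤ #(coatoms S w) := by exact_mod_cast hC
  linarith

lemma psi_pos_of_meets_eq_pair (hS0 : 0 ∉ S) (hS : GcdClosed S) (hw : w ∈ S)
    (hV : meets S w = {meet w (coatoms S w), m₁}) (h₁ : m₁ ≠ meet w (coatoms S w)) :
    0 < psi S w := by
  set C := coatoms S w
  set b := meet w C
  have hb : b ∈ meets S w := by simp [hV]
  have hm₁ : m₁ ∈ meets S w := by simp [hV]
  have hb₁ := not_dvd_meet_coatoms hm₁ h₁
  have hc₁ := sum_meetCoeff_filter_dvd hS0 hS hw hm₁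
  have hcb := sum_meetCoeff_filter_dvd hS0 hS hw hb
  rw [hV, filter_insert, if_neg hb₁, filter_singleton, if_pos dvd_rfl, sum_singleton] at hc₁
  rw [hV, filter_true_of_mem (by simpa using meet_coatoms_dvd_of_mem_meets hm₁),
    sum_pair h₁.symm, card_filter_meet_coatoms_dvd] at hcb
  have ha₁ := two_le_card_filter_dvd_of_mem_meets hm₁
  have hsplit : (#{y ∈ C | m₁ ∣ y} : ℚ) + #{y ∈ C | ¬ m₁ ∣ y} = #C := by
    exact_mod_cast card_filter_add_card_filter_not (s := C) (m₁ ∣ ·)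
  refine psi_pos_of_card_fiber_le hS0 hS hw (fun y => if m₁ ∣ y then m₁ else b)
    (fun y hy => ?_) fun m hm => ?_
  · split_ifs with h
    exacts [⟨hm₁, h⟩, ⟨hb, meet_dvd hy⟩]
  · rw [hV, mem_insert, mem_singleton] at hm
    rcases hm with rfl | rfl
    · rw [filter_congr fun y _ => show (if m₁ ∣ y then m₁ else b) = b ↔ ¬ m₁ ∣ y by
        split_ifs with h <;> simp [h, h₁]]
      linarith [(#{y ∈ C | ¬ m₁ ∣ y}).cast_nonneg (α := ℚ)]
    · rw [filter_congr fun y _ => show (if m ∣ y then m else b) = m ↔ m ∣ y by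
        split_ifs with h <;> simp [h, h₁.symm]]
      have : (2 : ℚ) ≤ #{y ∈ C | m ∣ y} := by exact_mod_cast ha₁
      linarith

lemma meetCoeff_of_meets_eq_triple (hS0 : 0 ∉ S) (hS : GcdClosed S) (hw : w ∈ S)
    (hV : meets S w = {meet w (coatoms S w), m₁, m₂}) (h₁ : m₁ ≠ meet w (coatoms S w))
    (h₂ : m₂ ≠ meet w (coatoms S w)) (h₁₂ : ¬ m₁ ∣ m₂) :
    meetCoeff S w m₁ = #{y ∈ coatoms S w | m₁ ∣ y} - 1 ∧
    meetCoeff S w (meet w (coatoms S w)) + meetCoeff S w m₁ + meetCoeff S w m₂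
      = #(coatoms S w) - 1 ∧
    (meetCoeff S w m₂ = #{y ∈ coatoms S w | m₂ ∣ y} - 1 ∧
        #{y ∈ coatoms S w | m₁ ∣ y ∧ m₂ ∣ y} ≤ 1 ∨
      meetCoeff S w m₂ = #{y ∈ coatoms S w | m₂ ∣ y} - #{y ∈ coatoms S w | m₁ ∣ y} ∧
        {y ∈ coatoms S w | m₁ ∣ y} ⊆ {y ∈ coatoms S w | m₂ ∣ y}) := by
  have hb : meet w (coatoms S w) ∈ meets S w := by simp [hV]
  have hm₁ : m₁ ∈ meets S w := by simp [hV]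
  have hm₂ : m₂ ∈ meets S w := by simp [hV]
  have hb₁ := not_dvd_meet_coatoms hm₁ h₁
  have hb₂ := not_dvd_meet_coatoms hm₂ h₂
  have hne : m₁ ≠ m₂ := by rintro rfl; exact h₁₂ dvd_rfl
  have hc₁ := sum_meetCoeff_filter_dvd hS0 hS hw hm₁
  have hc₂ := sum_meetCoeff_filter_dvd hS0 hS hw hm₂
  have hcb := sum_meetCoeff_filter_dvd hS0 hS hw hb
  rw [hV, filter_insert, if_neg hb₁, filter_insert, if_pos dvd_rfl, filter_singleton, if_neg h₁₂,
    insert_empty, sum_singleton] at hc₁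
  rw [hV, filter_insert, if_neg hb₂, filter_insert, filter_singleton, if_pos dvd_rfl] at hc₂
  rw [hV, filter_true_of_mem (by simpa using ⟨meet_coatoms_dvd_of_mem_meets hm₁,
      meet_coatoms_dvd_of_mem_meets hm₂⟩), sum_insert (by simp [h₁.symm, h₂.symm]), sum_pair hne,
    card_filter_meet_coatoms_dvd] at hcb
  refine ⟨hc₁, by linarith, ?_⟩
  by_cases h₂₁ : m₂ ∣ m₁
  · rw [if_pos h₂₁, sum_pair hne] at hc₂
    exact Or.inr ⟨by linarith, fun y hy => mem_filter.mpr ⟨(mem_filter.mp hy).1,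
      h₂₁.trans (mem_filter.mp hy).2⟩⟩
  · rw [if_neg h₂₁, sum_singleton] at hc₂
    refine Or.inl ⟨hc₂, card_filter_dvd_and_dvd_le_one (dvd_of_mem_meets hm₁)
      (dvd_of_mem_meets hm₂) ?_⟩
    simp only [hV, mem_insert, mem_singleton]
    rintro m (rfl | rfl | rfl) ⟨h, h'⟩
    exacts [hb₁ h, h₂₁ h', h₁₂ h]

lemma psi_pos_of_meets_eq_triple (hS0 : 0 ∉ S) (hS : GcdClosed S) (hw : w ∈ S)
    (hV : meets S w = {meet w (coatoms S w), m₁, m₂}) (h₁ : m₁ ≠ meet w (coatoms S w))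
    (h₂ : m₂ ≠ meet w (coatoms S w)) (h₁₂ : ¬ m₁ ∣ m₂) : 0 < psi S w := by
  set C := coatoms S w
  set b := meet w C
  set A₁ := {y ∈ C | m₁ ∣ y}
  set A₂ := {y ∈ C | m₂ ∣ y}
  set φ := fun y => if m₁ ∣ y then m₁ else if m₂ ∣ y then m₂ else b
  have hne : m₁ ≠ m₂ := by rintro rfl; exact h₁₂ dvd_rfl
  have hF₁ : {y ∈ C | φ y = m₁} = A₁ := filter_congr fun y _ => by
    simp only [φ]; split_ifs <;> simp_all [eq_comm]
  have hF₂ : {y ∈ C | φ y = m₂} = A₂ \ A₁ := by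
    ext y; simp only [mem_filter, mem_sdiff, φ, A₁, A₂]; split_ifs <;> simp_all [eq_comm]
  have hFb : {y ∈ C | φ y = b} = C \ (A₁ ∪ A₂) := by
    ext y; simp only [mem_filter, mem_sdiff, mem_union, φ, A₁, A₂]; split_ifs <;> simp_all [eq_comm]
  obtain ⟨hc₁, hcb, hc₂⟩ := meetCoeff_of_meets_eq_triple hS0 hS hw hV h₁ h₂ h₁₂
  have hm₁ : m₁ ∈ meets S w := by simp [hV]
  have hm₂ : m₂ ∈ meets S w := by simp [hV]
  have hinter : ((#(A₁ ∩ A₂) : ℚ) ≤ 1 ∧ meetCoeff S w m₂ = #A₂ - 1) ∨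
      ((#(A₁ ∩ A₂) : ℚ) = #A₁ ∧ meetCoeff S w m₂ = #A₂ - #A₁) := by
    rcases hc₂ with ⟨hc, hi⟩ | ⟨hc, hsub⟩
    · exact Or.inl ⟨by rw [← filter_and]; exact_mod_cast hi, hc⟩
    · exact Or.inr ⟨by rw [inter_eq_left.mpr hsub], hc⟩
  have hu : (#(A₁ ∪ A₂) : ℚ) + #(A₁ ∩ A₂) = #A₁ + #A₂ := by
    exact_mod_cast card_union_add_card_inter A₁ A₂
  have hd : (#(A₂ \ A₁) : ℚ) + #(A₁ ∩ A₂) = #A₂ := by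
    rw [inter_comm]; exact_mod_cast card_sdiff_add_card_inter A₂ A₁
  have hr : (#(C \ (A₁ ∪ A₂)) : ℚ) + #(A₁ ∪ A₂) = #C := by
    exact_mod_cast card_sdiff_add_card_eq_card
      (union_subset (filter_subset _ C) (filter_subset _ C))
  have ha₁ : (2 : ℚ) ≤ #A₁ := by exact_mod_cast two_le_card_filter_dvd_of_mem_meets hm₁
  have ha₂ : (2 : ℚ) ≤ #A₂ := by exact_mod_cast two_le_card_filter_dvd_of_mem_meets hm₂
  have hnonneg := (#(C \ (A₁ ∪ A₂))).cast_nonneg (α := ℚ)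
  have hnonneg' := (#(A₂ \ A₁)).cast_nonneg (α := ℚ)
  refine psi_pos_of_card_fiber_le hS0 hS hw φ (fun y hy => ?_) fun m hm => ?_
  · simp only [φ]
    split_ifs with h h'
    exacts [⟨hm₁, h⟩, ⟨hm₂, h'⟩, ⟨by simp [hV], meet_dvd hy⟩]
  rw [hV, mem_insert, mem_insert, mem_singleton] at hm
  rcases hm with hm | hm | hm <;> rw [hm]
  · rw [hFb]; rcases hinter with ⟨hi, hc⟩ | ⟨hi, hc⟩ <;> linarith
  · rw [hF₁]; linarith
  · rw [hF₂]; rcases hinter with ⟨hi, hc⟩ | ⟨hi, hc⟩ <;> linarith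

lemma psi_pos_of_card_meets_le_three (hS0 : 0 ∉ S) (hS : GcdClosed S) (hw : w ∈ S)
    (hC : 2 ≤ #(coatoms S w)) (hV : #(meets S w) ≤ 3) : 0 < psi S w := by
  set b := meet w (coatoms S w)
  have hb := meet_coatoms_mem_meets hC
  have hVb : meets S w = insert b ((meets S w).erase b) := (insert_erase hb).symm
  have hne : ∀ m ∈ (meets S w).erase b, m ≠ b := fun m hm => ne_of_mem_erase hm
  have hcard : #((meets S w).erase b) ≤ 2 := by rw [card_erase_of_mem hb]; omega
  interval_cases h : #((meets S w).erase b)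
  · rw [card_eq_zero.mp h] at hVb
    exact psi_pos_of_meets_eq_singleton hS0 hS hw hC hVb
  · obtain ⟨m, hm⟩ := card_eq_one.mp h
    rw [hm] at hVb hne
    exact psi_pos_of_meets_eq_pair hS0 hS hw hVb (hne m (mem_singleton_self m))
  · obtain ⟨m₁, m₂, h₁₂, hm⟩ := card_eq_two.mp h
    rw [hm] at hVb hne
    by_cases hd : m₁ ∣ m₂
    · exact psi_pos_of_meets_eq_triple hS0 hS hw (hVb.trans (by rw [pair_comm]))
        (hne m₂ (by simp)) (hne m₁ (by simp)) fun h => h₁₂ (Nat.dvd_antisymm hd h)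
    · exact psi_pos_of_meets_eq_triple hS0 hS hw hVb (hne m₁ (by simp)) (hne m₂ (by simp)) hd

end Positivity

section Boolean

variable {S : Finset ℕ} {w x : ℕ}

lemma insert_coatoms_union_meets_subset (hS : GcdClosed S) (hw : w ∈ S) :
    insert w (coatoms S w ∪ meets S w) ⊆ S :=
  insert_subset hw (union_subset coatoms_subset (meets_subset hS hw))

lemma card_insert_coatoms_union_meets :
    #(insert w (coatoms S w ∪ meets S w)) = 1 + #(coatoms S w) + #(meets S w) := by
  rw [card_insert_of_notMem, card_union_of_disjoint
    (disjoint_right.mpr fun _ hm => notMem_coatoms_of_mem_meets hm)]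
  · ring
  · rw [mem_union, not_or]
    exact ⟨fun h => ne_of_mem_coatoms h rfl, fun h => ne_of_mem_meets h rfl⟩

lemma exists_eq_meet_of_mem_insert_coatoms_union_meets
    (hx : x ∈ insert w (coatoms S w ∪ meets S w)) : ∃ T ⊆ coatoms S w, x = meet w T := by
  rcases mem_insert.mp hx with rfl | hx
  · exact ⟨∅, empty_subset _, meet_empty.symm⟩
  rcases mem_union.mp hx with hx | hx
  · exact ⟨{x}, singleton_subset_iff.mpr hx, (meet_singleton (dvd_of_mem_coatoms hx)).symm⟩
  · obtain ⟨T, hT, -, rfl⟩ := mem_meets.mp hx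
    exact ⟨T, hT, rfl⟩

theorem exists_bijective_dvd_iff_subset {C : Finset ℕ} {k : ℕ}
    (hmeet : ∀ x ∈ S, ∃ T ⊆ C, x = meet w T) (hC : #C = k) (hS : #S = 2 ^ k) :
    ∃ f : {x // x ∈ S} → Finset (Fin k), Function.Bijective f ∧
      ∀ a b : {x // x ∈ S}, (a.1 ∣ b.1 ↔ f a ⊆ f b) := by
  set y := C.orderEmbOfFin hC
  have hdvd : ∀ a b : {x // x ∈ S}, a.1 ∣ b.1 ↔ ∀ i, b.1 ∣ y i → a.1 ∣ y i := by
    intro a b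
    obtain ⟨Ta, -, ha⟩ := hmeet a a.2
    obtain ⟨Tb, hTb, hb⟩ := hmeet b b.2
    have h := dvd_meet_iff_forall_dvd (x := a.1) (ha ▸ meet_dvd_self) hTb
    rw [← hb] at h
    rw [h]
    constructor
    · exact fun h i => h _ (C.orderEmbOfFin_mem hC i)
    · intro h c hc
      obtain ⟨i, rfl⟩ : c ∈ Set.range y := by rw [range_orderEmbOfFin]; exact hc
      exact h i
  let f : {x // x ∈ S} → Finset (Fin k) := fun a => {i | ¬ a.1 ∣ y i}
  have hsub : ∀ a b, a.1 ∣ b.1 ↔ f a ⊆ f b := by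
    intro a b
    simp only [f, hdvd a b, subset_iff, mem_filter, mem_univ, true_and, not_imp_not]
  refine ⟨f, ?_, hsub⟩
  refine (Fintype.bijective_iff_injective_and_card _).mpr ⟨fun a b hab => ?_, by simp [hS]⟩
  exact Subtype.ext (Nat.dvd_antisymm ((hsub a b).mpr hab.le) ((hsub b a).mpr hab.ge))

end Boolean

theorem stmt11 (S : Finset ℕ) (h0 : 0 ∉ S)
    (hg : ∀ a ∈ S, ∀ b ∈ S, Nat.gcd a b ∈ S)
    (hcard : S.card = 8)
    (hsing : (Matrix.of fun a b : {x // x ∈ S} => (Nat.lcm a.1 b.1 : ℚ)).det = 0) :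
    ∃ f : {x // x ∈ S} → Finset (Fin 3), Function.Bijective f ∧
      ∀ a b : {x // x ∈ S}, (a.1 ∣ b.1 ↔ f a ⊆ f b) := by
  obtain ⟨w, hw, hψ⟩ := exists_psi_eq_zero h0 hg hsing
  have hC2 := two_le_card_coatoms_of_psi_eq_zero h0 hg hw hψ
  have hV : 4 ≤ #(meets S w) := by
    by_contra! h
    exact (psi_pos_of_card_meets_le_three h0 hg hw hC2 (by omega)).ne' hψ
  have hC3 : 3 ≤ #(coatoms S w) := by
    by_contra! h
    have := card_meets_le_one (S := S) (w := w) (by omega)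
    omega
  have hE := insert_coatoms_union_meets_subset hg hw
  have hEcard := card_insert_coatoms_union_meets (S := S) (w := w)
  have hES := eq_of_subset_of_card_le hE (by omega)
  have hC : #(coatoms S w) = 3 := by
    have := card_le_card hE
    omega
  exact exists_bijective_dvd_iff_subset
    (fun x hx => exists_eq_meet_of_mem_insert_coatoms_union_meets (hES.symm ▸ hx)) hC
    (by rw [hcard]; rfl)
end

section
/- Let p, q be distinct primes, m > 1 an integer, and S = {p^k q^l : 0 ≤ k, l ≤ m−1}. Then S is GCD closed, the LCM matrix [S] is invertible, and its inertia is i_-([S]) = 2(m−1) negative eigenvalues and i_+([S]) = (m−1)^2 + 1 positive eigenvalues. -/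
/-!
Index `S` by `(k, l) ∈ [0, m)²`. Since `lcm (p^k q^l) (p^k' q^l') = p^max(k,k') q^max(l,l')`, the
LCM matrix is the Kronecker product `A_p ⊗ A_q` of the matrices `A_r = (r ^ max(i, j))`. Writing
`r^s` as the telescoping sum over `t ≥ s` of the weights `w_t = r^t (1 - r)` (`t < m - 1`),
`w_{m-1} = r^(m-1)`, gives `A_r = Lᵀ diag(w) L` with `L` the lower triangular matrix of ones, so
`[S]` is congruent to the diagonal matrix with entries `w_t(p) w_u(q)`. For `r > 1` exactly one
`w_t` is positive and `m - 1` are negative, so these products have `(m-1)² + 1` positive and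
`2(m-1)` negative signs, and Sylvester's law of inertia carries the counts over to the eigenvalues.
-/

open Finset Matrix QuadraticMap
open scoped Kronecker

theorem weightedSumSquares_eq_dotProduct {R ι : Type*} [CommRing R] [Fintype ι] [DecidableEq ι]
    (d x : ι → R) : weightedSumSquares R d x = x ⬝ᵥ (diagonal d *ᵥ x) := by
  simp only [weightedSumSquares_apply, dotProduct, mulVec_diagonal, smul_eq_mul]
  exact sum_congr rfl fun i _ => by ring

section Inertia

variable {𝕜 ι κ : Type*} [Field 𝕜] [LinearOrder 𝕜] [IsStrictOrderedRing 𝕜]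
  [Fintype ι] [Fintype κ]

theorem card_neg_eq_of_equivalent_weightedSumSquares {d : ι → 𝕜} {e : κ → 𝕜}
    (h : (weightedSumSquares 𝕜 d).Equivalent (weightedSumSquares 𝕜 e)) :
    #{i | d i < 0} = #{j | e j < 0} := by
  have := QuadraticForm.sigNeg_of_equiv_weightedSumSquares h
  rw [QuadraticForm.sigNeg_weightedSumSquares] at this
  simpa only [Set.ncard_eq_toFinset_card', Set.toFinset_ofPred] using this

theorem card_pos_eq_of_equivalent_weightedSumSquares {d : ι → 𝕜} {e : κ → 𝕜}
    (h : (weightedSumSquares 𝕜 d).Equivalent (weightedSumSquares 𝕜 e)) :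
    #{i | 0 < d i} = #{j | 0 < e j} := by
  have := QuadraticForm.sigPos_of_equiv_weightedSumSquares h
  rw [QuadraticForm.sigPos_weightedSumSquares] at this
  simpa only [Set.ncard_eq_toFinset_card', Set.toFinset_ofPred] using this

end Inertia

section Congruence

variable {R ι κ : Type*} [CommRing R] [Fintype ι] [Fintype κ]

theorem weightedSumSquares_comp_equiv_equivalent (d : κ → R) (e : ι ≃ κ) :
    (weightedSumSquares R (d ∘ e)).Equivalent (weightedSumSquares R d) :=
  ⟨{ toLinearEquiv := LinearEquiv.funCongrLeft R R e.symm
     map_app' := fun x => by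
       rw [weightedSumSquares_apply, weightedSumSquares_apply, ← e.sum_comp]
       simp }⟩

variable [DecidableEq ι]

theorem weightedSumSquares_equivalent_of_diagonal_eq {d e : ι → R} {B : Matrix ι ι R}
    (hB : IsUnit B) (h : diagonal d = Bᵀ * diagonal e * B) :
    (weightedSumSquares R d).Equivalent (weightedSumSquares R e) :=
  ⟨{ toLinearEquiv := B.toLinearEquiv' hB.invertible
     map_app' := fun x => by
       change weightedSumSquares R e (B *ᵥ x) = _
       rw [weightedSumSquares_eq_dotProduct, weightedSumSquares_eq_dotProduct, h,
         ← mulVec_mulVec, ← mulVec_mulVec, dotProduct_mulVec x Bᵀ, vecMul_transpose] }⟩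

end Congruence

theorem Matrix.IsHermitian.weightedSumSquares_eigenvalues_equivalent {n κ : Type*}
    [Fintype n] [DecidableEq n] [Fintype κ] [DecidableEq κ] {A : Matrix n n ℝ}
    (hA : A.IsHermitian) (e : κ ≃ n) {B : Matrix κ κ ℝ} (hB : IsUnit B) {d : κ → ℝ}
    (h : A.submatrix e e = Bᵀ * diagonal d * B) :
    (weightedSumSquares ℝ hA.eigenvalues).Equivalent (weightedSumSquares ℝ d) := by
  set U : Matrix n n ℝ := (hA.eigenvectorUnitary : Matrix n n ℝ)
  have hdiag : diagonal hA.eigenvalues = Uᵀ * A * U := by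
    simpa [RCLike.ofReal_real_eq_id, Unitary.conjStarAlgAut_star_apply, star_eq_conjTranspose]
      using hA.conjStarAlgAut_star_eigenvectorUnitary.symm
  have hA' : A = (B.submatrix e.symm e.symm)ᵀ * diagonal (d ∘ e.symm) *
      B.submatrix e.symm e.symm := by
    rw [transpose_submatrix, ← submatrix_diagonal_equiv, submatrix_mul_equiv, submatrix_mul_equiv,
      ← h]
    simp
  have hBU : IsUnit (B.submatrix e.symm e.symm * U) := by
    rw [isUnit_iff_isUnit_det, det_mul, det_submatrix_equiv_self]
    exact ((isUnit_iff_isUnit_det _).1 hB).mul (UnitaryGroup.det_isUnit _)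
  refine (weightedSumSquares_equivalent_of_diagonal_eq hBU ?_).trans
    (weightedSumSquares_comp_equiv_equivalent d e.symm)
  rw [hdiag, hA', transpose_mul]
  simp only [Matrix.mul_assoc]

theorem Matrix.det_ne_zero_of_submatrix_eq {R n κ : Type*} [CommRing R] [IsDomain R]
    [Fintype n] [DecidableEq n] [Fintype κ] [DecidableEq κ] {A : Matrix n n R} (e : κ ≃ n)
    {B : Matrix κ κ R} (hB : IsUnit B) {d : κ → R} (hd : ∀ i, d i ≠ 0)
    (h : A.submatrix e e = Bᵀ * diagonal d * B) : A.det ≠ 0 := by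
  have hBdet : B.det ≠ 0 := ((isUnit_iff_isUnit_det B).1 hB).ne_zero
  rw [← det_submatrix_equiv_self e, h, det_mul, det_mul, det_transpose, det_diagonal]
  exact mul_ne_zero (mul_ne_zero hBdet (prod_ne_zero_iff.2 fun i _ => hd i)) hBdet

section MaxPow

variable {R : Type*} [CommRing R]

def maxPowMatrix (r : R) (m : ℕ) : Matrix (Fin m) (Fin m) R :=
  of fun i j => r ^ max (i : ℕ) j

def lowerTriangularOnes (R : Type*) [CommRing R] (m : ℕ) : Matrix (Fin m) (Fin m) R :=
  of fun t i => if i ≤ t then 1 else 0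

def maxPowWeight (r : R) (n t : ℕ) : R :=
  if t = n then r ^ n else r ^ t * (1 - r)

theorem det_lowerTriangularOnes (m : ℕ) : (lowerTriangularOnes R m).det = 1 := by
  have : (lowerTriangularOnes R m).IsLowerTriangular := fun i j hij => if_neg (not_le.2 hij)
  rw [det_of_isLowerTriangular _ this]
  simp [lowerTriangularOnes]

theorem sum_Ico_maxPowWeight (r : R) {s n : ℕ} (hs : s ≤ n) :
    ∑ t ∈ Ico s (n + 1), maxPowWeight r n t = r ^ s := by
  have : ∀ t ∈ Ico s n, maxPowWeight r n t = r ^ t * (1 - r) :=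
    fun t ht => if_neg (mem_Ico.1 ht).2.ne
  rw [sum_Ico_succ_top hs, sum_congr rfl this, ← sum_mul, geom_sum_Ico_mul_neg r hs,
    maxPowWeight, if_pos rfl, sub_add_cancel]

theorem maxPowMatrix_eq (r : R) (n : ℕ) :
    maxPowMatrix r (n + 1) = (lowerTriangularOnes R (n + 1))ᵀ *
      diagonal (fun t : Fin (n + 1) => maxPowWeight r n t) * lowerTriangularOnes R (n + 1) := by
  ext i j
  have hmax : max (i : ℕ) j ≤ n := max_le (Nat.lt_succ_iff.1 i.2) (Nat.lt_succ_iff.1 j.2)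
  have hfilter :
      (range (n + 1)).filter (max (i : ℕ) j ≤ ·) = Ico (max (i : ℕ) j) (n + 1) := by
    ext t; simp only [mem_filter, mem_range, mem_Ico]; omega
  rw [mul_apply]
  simp only [mul_diagonal, transpose_apply, lowerTriangularOnes, maxPowMatrix, of_apply]
  calc r ^ max (i : ℕ) j
      = ∑ t ∈ range (n + 1), if max (i : ℕ) j ≤ t then maxPowWeight r n t else 0 := by
        rw [← sum_filter, hfilter, sum_Ico_maxPowWeight r hmax]
    _ = ∑ t : Fin (n + 1), if max (i : ℕ) j ≤ t then maxPowWeight r n t else 0 :=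
        (Fin.sum_univ_eq_sum_range
          (fun t => if max (i : ℕ) j ≤ t then maxPowWeight r n t else 0) _).symm
    _ = _ := sum_congr rfl fun t _ => by
        simp only [max_le_iff, Fin.le_def]
        split_ifs <;> simp_all

variable [LinearOrder R] [IsStrictOrderedRing R]

theorem maxPowWeight_neg {r : R} (hr : 1 < r) {n t : ℕ} (ht : t ≠ n) :
    maxPowWeight r n t < 0 := by
  rw [maxPowWeight, if_neg ht]
  exact mul_neg_of_pos_of_neg (by positivity) (sub_neg.2 hr)

theorem maxPowWeight_self_pos {r : R} (hr : 1 < r) (n : ℕ) : 0 < maxPowWeight r n n := by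
  rw [maxPowWeight, if_pos rfl]
  positivity

theorem maxPowWeight_ne_zero {r : R} (hr : 1 < r) (n t : ℕ) : maxPowWeight r n t ≠ 0 := by
  rcases eq_or_ne t n with rfl | ht
  · exact (maxPowWeight_self_pos hr t).ne'
  · exact (maxPowWeight_neg hr ht).ne

theorem maxPowWeight_neg_iff {r : R} (hr : 1 < r) {n : ℕ} (t : Fin (n + 1)) :
    maxPowWeight r n t < 0 ↔ t ≠ Fin.last n := by
  rw [Ne, Fin.ext_iff, Fin.val_last]
  refine ⟨fun h ht => ?_, maxPowWeight_neg hr⟩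
  rw [ht] at h
  exact (maxPowWeight_self_pos hr n).not_gt h

theorem maxPowWeight_pos_iff {r : R} (hr : 1 < r) {n : ℕ} (t : Fin (n + 1)) :
    0 < maxPowWeight r n t ↔ t = Fin.last n := by
  refine ⟨fun h => not_not.1 fun ht => ((maxPowWeight_neg_iff hr t).2 ht).not_gt h, ?_⟩
  rintro rfl
  exact maxPowWeight_self_pos hr n

theorem card_maxPowWeight_neg {r : R} (hr : 1 < r) (n : ℕ) :
    #{t : Fin (n + 1) | maxPowWeight r n t < 0} = n := by
  simp only [maxPowWeight_neg_iff hr]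
  rw [filter_ne', card_erase_of_mem (mem_univ _), card_univ, Fintype.card_fin, Nat.add_sub_cancel]

theorem card_maxPowWeight_pos {r : R} (hr : 1 < r) (n : ℕ) :
    #{t : Fin (n + 1) | 0 < maxPowWeight r n t} = 1 := by
  simp only [maxPowWeight_pos_iff hr]
  rw [filter_eq', if_pos (mem_univ _), card_singleton]

end MaxPow

section PowMulPow

variable {p q : ℕ} (hp : p.Prime) (hq : q.Prime)
include hp hq

theorem pow_mul_pow_ne_zero (a b : ℕ) : p ^ a * q ^ b ≠ 0 :=
  mul_ne_zero (pow_ne_zero _ hp.ne_zero) (pow_ne_zero _ hq.ne_zero)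

theorem factorization_pow_mul_pow (a b : ℕ) :
    (p ^ a * q ^ b).factorization = Finsupp.single p a + Finsupp.single q b := by
  rw [Nat.factorization_mul (pow_ne_zero _ hp.ne_zero) (pow_ne_zero _ hq.ne_zero),
    hp.factorization_pow, hq.factorization_pow]

variable (hpq : p ≠ q)
include hpq

theorem pow_mul_pow_injective : Function.Injective fun kl : ℕ × ℕ => p ^ kl.1 * q ^ kl.2 := by
  rintro ⟨a, b⟩ ⟨c, d⟩ h
  have hfac := congrArg Nat.factorization h
  have hp' := DFunLike.congr_fun hfac p
  have hq' := DFunLike.congr_fun hfac q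
  simp only [factorization_pow_mul_pow hp hq, Finsupp.add_apply, Finsupp.single_apply] at hp' hq'
  simp only [Prod.mk.injEq]
  split_ifs at hp' hq' <;> omega

theorem lcm_pow_mul_pow (a b c d : ℕ) :
    Nat.lcm (p ^ a * q ^ b) (p ^ c * q ^ d) = p ^ max a c * q ^ max b d := by
  refine Nat.eq_of_factorization_eq
    (Nat.lcm_ne_zero (pow_mul_pow_ne_zero hp hq _ _) (pow_mul_pow_ne_zero hp hq _ _))
    (pow_mul_pow_ne_zero hp hq _ _) fun r => ?_
  rw [Nat.factorization_lcm (pow_mul_pow_ne_zero hp hq _ _) (pow_mul_pow_ne_zero hp hq _ _),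
    Finsupp.sup_apply]
  simp only [factorization_pow_mul_pow hp hq, Finsupp.add_apply, Finsupp.single_apply]
  split_ifs <;> omega

theorem gcd_pow_mul_pow (a b c d : ℕ) :
    Nat.gcd (p ^ a * q ^ b) (p ^ c * q ^ d) = p ^ min a c * q ^ min b d := by
  refine Nat.eq_of_factorization_eq
    (Nat.gcd_ne_zero_left (pow_mul_pow_ne_zero hp hq _ _))
    (pow_mul_pow_ne_zero hp hq _ _) fun r => ?_
  rw [Nat.factorization_gcd (pow_mul_pow_ne_zero hp hq _ _) (pow_mul_pow_ne_zero hp hq _ _),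
    Finsupp.inf_apply]
  simp only [factorization_pow_mul_pow hp hq, Finsupp.add_apply, Finsupp.single_apply]
  split_ifs <;> omega

noncomputable def powMulPowEquiv (m : ℕ) :
    Fin m × Fin m ≃ ((range m ×ˢ range m).image fun kl : ℕ × ℕ => p ^ kl.1 * q ^ kl.2) :=
  Equiv.ofBijective
    (fun t => ⟨p ^ (t.1 : ℕ) * q ^ (t.2 : ℕ), mem_image.2 ⟨(t.1, t.2), by simp, rfl⟩⟩)
    ⟨fun s t h => by
      have := pow_mul_pow_injective hp hq hpq (a₁ := (s.1, s.2)) (a₂ := (t.1, t.2))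
        (Subtype.ext_iff.1 h)
      simp only [Prod.mk.injEq] at this
      exact Prod.ext (Fin.ext this.1) (Fin.ext this.2),
     by
      rintro ⟨x, hx⟩
      obtain ⟨⟨k, l⟩, hkl, rfl⟩ := mem_image.1 hx
      rw [mem_product, mem_range, mem_range] at hkl
      exact ⟨(⟨k, hkl.1⟩, ⟨l, hkl.2⟩), rfl⟩⟩

theorem powMulPowEquiv_coe (m : ℕ) (t : Fin m × Fin m) :
    (powMulPowEquiv hp hq hpq m t : ℕ) = p ^ (t.1 : ℕ) * q ^ (t.2 : ℕ) :=
  rfl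

theorem gcd_mem_image_pow_mul_pow {m a b : ℕ}
    (ha : a ∈ (range m ×ˢ range m).image fun kl : ℕ × ℕ => p ^ kl.1 * q ^ kl.2)
    (hb : b ∈ (range m ×ˢ range m).image fun kl : ℕ × ℕ => p ^ kl.1 * q ^ kl.2) :
    Nat.gcd a b ∈ (range m ×ˢ range m).image fun kl : ℕ × ℕ => p ^ kl.1 * q ^ kl.2 := by
  obtain ⟨⟨i, j⟩, hij, rfl⟩ := mem_image.1 ha
  obtain ⟨⟨k, l⟩, hkl, rfl⟩ := mem_image.1 hb
  rw [gcd_pow_mul_pow hp hq hpq]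
  refine mem_image.2 ⟨(min i k, min j l), ?_, rfl⟩
  simp only [mem_product, mem_range] at hij hkl ⊢
  omega

theorem submatrix_powMulPowEquiv_lcm (m : ℕ) :
    (of fun a b : ((range m ×ˢ range m).image fun kl : ℕ × ℕ => p ^ kl.1 * q ^ kl.2) =>
        (Nat.lcm a.1 b.1 : ℝ)).submatrix
        (powMulPowEquiv hp hq hpq m) (powMulPowEquiv hp hq hpq m) =
      maxPowMatrix (p : ℝ) m ⊗ₖ maxPowMatrix (q : ℝ) m := by
  ext s t
  simp only [submatrix_apply, of_apply, powMulPowEquiv_coe, lcm_pow_mul_pow hp hq hpq,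
    kroneckerMap_apply, maxPowMatrix]
  push_cast
  rfl

end PowMulPow

theorem kronecker_transpose_mul_diagonal_mul {R k l k' l' : Type*} [CommRing R]
    [Fintype k] [Fintype k'] [DecidableEq k] [DecidableEq k']
    (A : Matrix k l R) (B : Matrix k' l' R) (a : k → R) (b : k' → R) :
    (Aᵀ * diagonal a * A) ⊗ₖ (Bᵀ * diagonal b * B) =
      (A ⊗ₖ B)ᵀ * diagonal (fun t : k × k' => a t.1 * b t.2) * (A ⊗ₖ B) := by
  rw [mul_kronecker_mul, mul_kronecker_mul, kroneckerMap_transpose, diagonal_kronecker_diagonal]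

section SignCount

variable {R ι κ : Type*} [Ring R] [LinearOrder R] [IsStrictOrderedRing R]
  [Fintype ι] [Fintype κ] [DecidableEq ι] [DecidableEq κ]

theorem card_mul_neg (a : ι → R) (b : κ → R) :
    #{t : ι × κ | a t.1 * b t.2 < 0} =
      #{i | 0 < a i} * #{j | b j < 0} + #{i | a i < 0} * #{j | 0 < b j} := by
  have : univ.filter (fun t : ι × κ => a t.1 * b t.2 < 0) =
      univ.filter (0 < a ·) ×ˢ univ.filter (b · < 0) ∪
        univ.filter (a · < 0) ×ˢ univ.filter (0 < b ·) := by
    ext t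
    simp [mul_neg_iff]
  rw [this, card_union_of_disjoint, card_product, card_product]
  refine disjoint_left.2 fun t h₁ h₂ => ?_
  simp only [mem_product, mem_filter, mem_univ, true_and] at h₁ h₂
  exact h₁.1.not_gt h₂.1

theorem card_mul_pos (a : ι → R) (b : κ → R) :
    #{t : ι × κ | 0 < a t.1 * b t.2} =
      #{i | 0 < a i} * #{j | 0 < b j} + #{i | a i < 0} * #{j | b j < 0} := by
  have : univ.filter (fun t : ι × κ => 0 < a t.1 * b t.2) =
      univ.filter (0 < a ·) ×ˢ univ.filter (0 < b ·) ∪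
        univ.filter (a · < 0) ×ˢ univ.filter (b · < 0) := by
    ext t
    simp [mul_pos_iff]
  rw [this, card_union_of_disjoint, card_product, card_product]
  refine disjoint_left.2 fun t h₁ h₂ => ?_
  simp only [mem_product, mem_filter, mem_univ, true_and] at h₁ h₂
  exact h₁.1.not_gt h₂.1

end SignCount

theorem stmt18 (p q m : ℕ) (hp : p.Prime) (hq : q.Prime) (hpq : p ≠ q)
    (hm : 1 < m)
    (S : Finset ℕ)
    (hS : S = (Finset.range m ×ˢ Finset.range m).image fun kl => p ^ kl.1 * q ^ kl.2)
    (M : Matrix {x // x ∈ S} {x // x ∈ S} ℝ)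
    (hMdef : M = Matrix.of fun a b => (Nat.lcm a.1 b.1 : ℝ))
    (hM : M.IsHermitian) :
    (∀ a ∈ S, ∀ b ∈ S, Nat.gcd a b ∈ S) ∧
    M.det ≠ 0 ∧
    (Finset.univ.filter fun i => hM.eigenvalues i < 0).card = 2 * (m - 1) ∧
    (Finset.univ.filter fun i => 0 < hM.eigenvalues i).card = (m - 1) ^ 2 + 1 := by
  obtain ⟨n, rfl⟩ : ∃ n, m = n + 1 := ⟨m - 1, by omega⟩
  subst hS
  have hcong := submatrix_powMulPowEquiv_lcm hp hq hpq (n + 1)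
  rw [← hMdef, maxPowMatrix_eq, maxPowMatrix_eq, kronecker_transpose_mul_diagonal_mul] at hcong
  have hL : IsUnit (lowerTriangularOnes ℝ (n + 1) ⊗ₖ lowerTriangularOnes ℝ (n + 1)) := by
    simp [isUnit_iff_isUnit_det, det_kronecker, det_lowerTriangularOnes]
  have hequiv := hM.weightedSumSquares_eigenvalues_equivalent _ hL hcong
  have hp₁ : (1 : ℝ) < p := by exact_mod_cast hp.one_lt
  have hq₁ : (1 : ℝ) < q := by exact_mod_cast hq.one_lt
  refine ⟨fun a ha b hb => gcd_mem_image_pow_mul_pow hp hq hpq ha hb,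
    det_ne_zero_of_submatrix_eq _ hL
      (fun _ => mul_ne_zero (maxPowWeight_ne_zero hp₁ _ _) (maxPowWeight_ne_zero hq₁ _ _))
      hcong,
    ?_, ?_⟩
  · rw [card_neg_eq_of_equivalent_weightedSumSquares hequiv,
      card_mul_neg (fun i : Fin (n + 1) => maxPowWeight (p : ℝ) n i)
        (fun j : Fin (n + 1) => maxPowWeight (q : ℝ) n j),
      card_maxPowWeight_neg hp₁, card_maxPowWeight_neg hq₁, card_maxPowWeight_pos hp₁,
      card_maxPowWeight_pos hq₁]
    omega
  · rw [card_pos_eq_of_equivalent_weightedSumSquares hequiv,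
      card_mul_pos (fun i : Fin (n + 1) => maxPowWeight (p : ℝ) n i)
        (fun j : Fin (n + 1) => maxPowWeight (q : ℝ) n j),
      card_maxPowWeight_neg hp₁, card_maxPowWeight_neg hq₁, card_maxPowWeight_pos hp₁,
      card_maxPowWeight_pos hq₁, Nat.add_sub_cancel]
    ring
end
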